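/- arXiv:2207.09867 — 2 statements merged into one kernel-verified Lean document; each statement's English description precedes it below -/
import Mathlib

section
/- With the above notation, $2\left(y_1 C^{(m)} - F_m C^{(m-1)}\right) - A^{(m)} = \mathbf{y} - \dfrac{\mathbf{F}}{\mathbf{y}} = \delta$ holds in $L$. -/
/- Setting: `Lm K m` is the field of fractions of the (Laurent) polynomial ring over a field
`K` in commuting variables `yv n` indexed by `n : ZMod m`, with fixed scalars `F n : K`. -/

noncomputable section

variable (K : Type) [Field K] (m : ℕ) [NeZero m]

/-- The ambient field `L`. -/
abbrev Lm := FractionRing (MvPolynomial (ZMod m) K)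

/-- The variable `y_n`. -/
def yv (n : ZMod m) : Lm K m :=
  algebraMap (MvPolynomial (ZMod m) K) (Lm K m) (MvPolynomial.X n)

variable (F : ZMod m → K)

/-- The scalar `F_n` viewed inside `L`. -/
def Fc (n : ZMod m) : Lm K m := algebraMap K (Lm K m) (F n)

/-- `X_n = F_n / (y_n y_{n+1})`. -/
def Xv (n : ZMod m) : Lm K m := Fc K m F n / (yv K m n * yv K m (n + 1))

/-- `P_n = 1 + ∑_{k=0}^{m-2} X_n X_{n-1} ⋯ X_{n-k}`. -/
def Pv (n : ZMod m) : Lm K m :=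
  1 + ∑ k ∈ Finset.range (m - 1), ∏ j ∈ Finset.range (k + 1), Xv K m F (n - (j : ZMod m))

/-- `z_n = y_n (1 + X_n)`. -/
def zv (n : ZMod m) : Lm K m := yv K m n * (1 + Xv K m F n)

/-- `𝐲 = ∏_n y_n`. -/
def boldy : Lm K m := ∏ n : ZMod m, yv K m n

/-- `𝐅 = ∏_n F_n` (viewed in `L`). -/
def boldF : Lm K m := ∏ n : ZMod m, Fc K m F n

/-- `δ = 𝐲 - 𝐅/𝐲`. -/
def deltav : Lm K m := boldy K m - boldF K m F / boldy K m
/-- `C^{(1)} = 1`, `C^{(2)} = z_2`, `C^{(k)} = z_k C^{(k-1)} - F_{k-1} C^{(k-2)}` (indices mod `m`). -/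
def Cv : ℕ → Lm K m
  | 0 => 1
  | 1 => 1
  | 2 => zv K m F ((2 : ℕ) : ZMod m)
  | (k + 3) => zv K m F ((k + 3 : ℕ) : ZMod m) * Cv (k + 2)
      - Fc K m F ((k + 2 : ℕ) : ZMod m) * Cv (k + 1)

/-- The shifted sequence `C_+^{(1)} = 1`, `C_+^{(2)} = z_3`,
`C_+^{(k)} = z_{k+1} C_+^{(k-1)} - F_k C_+^{(k-2)}` (indices mod `m`). -/
def Cpv : ℕ → Lm K m
  | 0 => 1
  | 1 => 1
  | 2 => zv K m F ((3 : ℕ) : ZMod m)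
  | (k + 3) => zv K m F ((k + 4 : ℕ) : ZMod m) * Cpv (k + 2)
      - Fc K m F ((k + 3 : ℕ) : ZMod m) * Cpv (k + 1)

/-- `A^{(m)} = z_1 C^{(m)} - F_m C^{(m-1)} - F_1 C_+^{(m-1)}`. -/
def Av : Lm K m :=
  zv K m F ((1 : ℕ) : ZMod m) * Cv K m F m - Fc K m F ((m : ℕ) : ZMod m) * Cv K m F (m - 1)
    - Fc K m F ((1 : ℕ) : ZMod m) * Cpv K m F (m - 1)


set_option linter.unusedSectionVars false

lemma yv_ne (n : ZMod m) : yv K m n ≠ 0 := by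
  unfold yv
  simp only [ne_eq, IsFractionRing.to_map_eq_zero_iff]
  exact MvPolynomial.X_ne_zero n

lemma Fc_ne (hF : ∀ n, F n ≠ 0) (n : ZMod m) : Fc K m F n ≠ 0 := by
  unfold Fc
  exact fun h => hF n ((map_eq_zero _).mp h)

lemma zy (n : ZMod m) : zv K m F n * yv K m (n+1) = yv K m n * yv K m (n+1) + Fc K m F n := by
  unfold zv Xv
  have h1 := yv_ne K m n
  have h2 := yv_ne K m (n+1)
  field_simp

/-- Division-free continuant `T_k` with `C^{(k)} = T_k / (y_3 ⋯ y_{k+1})`. -/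
def Tv : ℕ → Lm K m
  | 0 => 0
  | 1 => 1
  | (k+2) => (yv K m ((k+2 : ℕ) : ZMod m) * yv K m ((k+3 : ℕ) : ZMod m)
        + Fc K m F ((k+2 : ℕ) : ZMod m)) * Tv (k+1)
      - Fc K m F ((k+1 : ℕ) : ZMod m)
        * (yv K m ((k+2 : ℕ) : ZMod m) * yv K m ((k+3 : ℕ) : ZMod m)) * Tv k

/-- Shifted division-free continuant with `C_+^{(k)} = T⁺_k / (y_4 ⋯ y_{k+2})`. -/
def Tpv : ℕ → Lm K m
  | 0 => 0
  | 1 => 1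
  | (k+2) => (yv K m ((k+3 : ℕ) : ZMod m) * yv K m ((k+4 : ℕ) : ZMod m)
        + Fc K m F ((k+3 : ℕ) : ZMod m)) * Tpv (k+1)
      - Fc K m F ((k+2 : ℕ) : ZMod m)
        * (yv K m ((k+3 : ℕ) : ZMod m) * yv K m ((k+4 : ℕ) : ZMod m)) * Tpv k

def Dv (k : ℕ) : Lm K m := ∏ i ∈ Finset.range k, yv K m ((i+3 : ℕ) : ZMod m)
def Dpv (k : ℕ) : Lm K m := ∏ i ∈ Finset.range k, yv K m ((i+4 : ℕ) : ZMod m)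
def Qv (k : ℕ) : Lm K m :=
  ∏ i ∈ Finset.range k, (yv K m ((i+2 : ℕ) : ZMod m) * yv K m ((i+3 : ℕ) : ZMod m))
def Rv (k : ℕ) : Lm K m := ∏ i ∈ Finset.range k, Fc K m F ((i+2 : ℕ) : ZMod m)

lemma Dv_ne (k : ℕ) : Dv K m k ≠ 0 :=
  Finset.prod_ne_zero_iff.mpr fun i _ => yv_ne K m _

lemma CT : ∀ k : ℕ, Cv K m F (k+1) * Dv K m k = Tv K m F (k+1)
  | 0 => by simp [Cv, Dv, Tv]
  | 1 => by
      have h := zy K m F ((2 : ℕ) : ZMod m)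
      have h3 : ((2 : ℕ) : ZMod m) + 1 = ((3 : ℕ) : ZMod m) := by push_cast; ring
      rw [h3] at h
      simp only [Cv, Tv, Dv, Finset.prod_range_one]
      linear_combination h
  | (k+2) => by
      have ih1 := CT k
      have ih2 := CT (k+1)
      have h := zy K m F ((k+3 : ℕ) : ZMod m)
      have h4 : ((k+3 : ℕ) : ZMod m) + 1 = ((k+4 : ℕ) : ZMod m) := by push_cast; ring
      rw [h4] at h
      have hC : Cv K m F (k+3) = zv K m F ((k+3 : ℕ) : ZMod m) * Cv K m F (k+2)
          - Fc K m F ((k+2 : ℕ) : ZMod m) * Cv K m F (k+1) := rfl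
      have hT : Tv K m F (k+3) = (yv K m ((k+3 : ℕ) : ZMod m) * yv K m ((k+4 : ℕ) : ZMod m)
            + Fc K m F ((k+3 : ℕ) : ZMod m)) * Tv K m F (k+2)
          - Fc K m F ((k+2 : ℕ) : ZMod m)
            * (yv K m ((k+3 : ℕ) : ZMod m) * yv K m ((k+4 : ℕ) : ZMod m)) * Tv K m F (k+1) := rfl
      have hD2 : Dv K m (k+2) = Dv K m (k+1) * yv K m ((k+4 : ℕ) : ZMod m) := by
        unfold Dv; rw [Finset.prod_range_succ]
      have hD1 : Dv K m (k+1) = Dv K m k * yv K m ((k+3 : ℕ) : ZMod m) := by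
        unfold Dv; rw [Finset.prod_range_succ]
      rw [hD1] at ih2
      rw [hC, hT, hD2, hD1]
      linear_combination (Cv K m F (k+2) * Dv K m k * yv K m ((k+3 : ℕ) : ZMod m)) * h
        + (yv K m ((k+3 : ℕ) : ZMod m) * yv K m ((k+4 : ℕ) : ZMod m)
            + Fc K m F ((k+3 : ℕ) : ZMod m)) * ih2
        - Fc K m F ((k+2 : ℕ) : ZMod m) * (yv K m ((k+3 : ℕ) : ZMod m)
            * yv K m ((k+4 : ℕ) : ZMod m)) * ih1

set_option linter.unusedSectionVars false
set_option linter.unusedVariables false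

lemma Dpv_ne (k : ℕ) : Dpv K m k ≠ 0 :=
  Finset.prod_ne_zero_iff.mpr fun i _ => yv_ne K m _

lemma CTp : ∀ k : ℕ, Cpv K m F (k+1) * Dpv K m k = Tpv K m F (k+1)
  | 0 => by simp [Cpv, Dpv, Tpv]
  | 1 => by
      have h := zy K m F ((3 : ℕ) : ZMod m)
      have h3 : ((3 : ℕ) : ZMod m) + 1 = ((4 : ℕ) : ZMod m) := by push_cast; ring
      rw [h3] at h
      simp only [Cpv, Tpv, Dpv, Finset.prod_range_one]
      linear_combination h
  | (k+2) => by
      have ih1 := CTp k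
      have ih2 := CTp (k+1)
      have h := zy K m F ((k+4 : ℕ) : ZMod m)
      have h4 : ((k+4 : ℕ) : ZMod m) + 1 = ((k+5 : ℕ) : ZMod m) := by push_cast; ring
      rw [h4] at h
      have hC : Cpv K m F (k+3) = zv K m F ((k+4 : ℕ) : ZMod m) * Cpv K m F (k+2)
          - Fc K m F ((k+3 : ℕ) : ZMod m) * Cpv K m F (k+1) := rfl
      have hT : Tpv K m F (k+3) = (yv K m ((k+4 : ℕ) : ZMod m) * yv K m ((k+5 : ℕ) : ZMod m)
            + Fc K m F ((k+4 : ℕ) : ZMod m)) * Tpv K m F (k+2)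
          - Fc K m F ((k+3 : ℕ) : ZMod m)
            * (yv K m ((k+4 : ℕ) : ZMod m) * yv K m ((k+5 : ℕ) : ZMod m)) * Tpv K m F (k+1) := by
        show Tpv K m F ((k+1)+2) = _
        rfl
      have hD2 : Dpv K m (k+2) = Dpv K m (k+1) * yv K m ((k+5 : ℕ) : ZMod m) := by
        unfold Dpv; rw [Finset.prod_range_succ]
      have hD1 : Dpv K m (k+1) = Dpv K m k * yv K m ((k+4 : ℕ) : ZMod m) := by
        unfold Dpv; rw [Finset.prod_range_succ]
      rw [hD1] at ih2
      rw [hC, hT, hD2, hD1]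
      linear_combination (Cpv K m F (k+2) * Dpv K m k * yv K m ((k+4 : ℕ) : ZMod m)) * h
        + (yv K m ((k+4 : ℕ) : ZMod m) * yv K m ((k+5 : ℕ) : ZMod m)
            + Fc K m F ((k+4 : ℕ) : ZMod m)) * ih2
        - Fc K m F ((k+3 : ℕ) : ZMod m) * (yv K m ((k+4 : ℕ) : ZMod m)
            * yv K m ((k+5 : ℕ) : ZMod m)) * ih1

/-- Telescoping identity `T_{k+1} - F_{k+1} T_k = Q_k`. -/
lemma lemA : ∀ k : ℕ, Tv K m F (k+1) - Fc K m F ((k+1 : ℕ) : ZMod m) * Tv K m F k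
    = Qv K m (k) := by
  intro k
  induction k with
  | zero => simp [Tv, Qv]
  | succ k ih =>
      have hT : Tv K m F (k+2) = (yv K m ((k+2 : ℕ) : ZMod m) * yv K m ((k+3 : ℕ) : ZMod m)
            + Fc K m F ((k+2 : ℕ) : ZMod m)) * Tv K m F (k+1)
          - Fc K m F ((k+1 : ℕ) : ZMod m)
            * (yv K m ((k+2 : ℕ) : ZMod m) * yv K m ((k+3 : ℕ) : ZMod m)) * Tv K m F k := rfl
      have hQ : Qv K m (k+1) = Qv K m k
          * (yv K m ((k+2 : ℕ) : ZMod m) * yv K m ((k+3 : ℕ) : ZMod m)) := by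
        unfold Qv; rw [Finset.prod_range_succ]
      rw [hT, hQ]
      linear_combination (yv K m ((k+2 : ℕ) : ZMod m) * yv K m ((k+3 : ℕ) : ZMod m)) * ih

/-- Telescoping identity `T_{k+1} - y_2 y_3 T⁺_k = R_k`. -/
lemma lemB : ∀ k : ℕ, Tv K m F (k+1)
    - yv K m ((2 : ℕ) : ZMod m) * yv K m ((3 : ℕ) : ZMod m) * Tpv K m F k = Rv K m F k
  | 0 => by simp [Tv, Tpv, Rv]
  | 1 => by
      have hT : Tv K m F 2 = (yv K m ((2 : ℕ) : ZMod m) * yv K m ((3 : ℕ) : ZMod m)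
            + Fc K m F ((2 : ℕ) : ZMod m)) * Tv K m F 1
          - Fc K m F ((1 : ℕ) : ZMod m)
            * (yv K m ((2 : ℕ) : ZMod m) * yv K m ((3 : ℕ) : ZMod m)) * Tv K m F 0 := rfl
      rw [hT]
      simp [Tv, Tpv, Rv]
  | (k+2) => by
      have ih1 := lemB k
      have ih2 := lemB (k+1)
      have hT : Tv K m F (k+3) = (yv K m ((k+3 : ℕ) : ZMod m) * yv K m ((k+4 : ℕ) : ZMod m)
            + Fc K m F ((k+3 : ℕ) : ZMod m)) * Tv K m F (k+2)
          - Fc K m F ((k+2 : ℕ) : ZMod m)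
            * (yv K m ((k+3 : ℕ) : ZMod m) * yv K m ((k+4 : ℕ) : ZMod m)) * Tv K m F (k+1) := by
        show Tv K m F ((k+1)+2) = _
        rfl
      have hTp : Tpv K m F (k+2) = (yv K m ((k+3 : ℕ) : ZMod m) * yv K m ((k+4 : ℕ) : ZMod m)
            + Fc K m F ((k+3 : ℕ) : ZMod m)) * Tpv K m F (k+1)
          - Fc K m F ((k+2 : ℕ) : ZMod m)
            * (yv K m ((k+3 : ℕ) : ZMod m) * yv K m ((k+4 : ℕ) : ZMod m)) * Tpv K m F k := rfl
      have hR2 : Rv K m F (k+2) = Rv K m F (k+1) * Fc K m F ((k+3 : ℕ) : ZMod m) := by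
        unfold Rv; rw [Finset.prod_range_succ]
      have hR1 : Rv K m F (k+1) = Rv K m F k * Fc K m F ((k+2 : ℕ) : ZMod m) := by
        unfold Rv; rw [Finset.prod_range_succ]
      rw [hT, hTp, hR2, hR1]
      linear_combination (yv K m ((k+3 : ℕ) : ZMod m) * yv K m ((k+4 : ℕ) : ZMod m)
            + Fc K m F ((k+3 : ℕ) : ZMod m)) * ih2
        - Fc K m F ((k+2 : ℕ) : ZMod m) * (yv K m ((k+3 : ℕ) : ZMod m)
            * yv K m ((k+4 : ℕ) : ZMod m)) * ih1
        + (yv K m ((k+3 : ℕ) : ZMod m) * yv K m ((k+4 : ℕ) : ZMod m)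
            + Fc K m F ((k+3 : ℕ) : ZMod m)) * hR1

set_option linter.unusedSectionVars false

lemma prod_natCast {α : Type*} [CommMonoid α] (g : ZMod m → α) :
    ∏ i ∈ Finset.range m, g ((i : ℕ) : ZMod m) = ∏ n : ZMod m, g n := by
  apply Finset.prod_nbij' (fun i => ((i : ℕ) : ZMod m)) (fun n => n.val)
  · intro a ha; exact Finset.mem_univ _
  · intro a ha; exact Finset.mem_range.mpr (ZMod.val_lt a)
  · intro a ha; exact ZMod.val_natCast_of_lt (Finset.mem_range.mp ha)
  · intro a ha; simp
  · intro a ha; rfl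

lemma prod_shift {α : Type*} [CommMonoid α] (g : ZMod m → α) (c : ZMod m) :
    ∏ n : ZMod m, g (n + c) = ∏ n : ZMod m, g n :=
  Fintype.prod_equiv (Equiv.addRight c) _ _ (fun x => rfl)

lemma prod_shift_range {α : Type*} [CommMonoid α] (g : ZMod m → α) (c : ℕ) :
    ∏ i ∈ Finset.range m, g ((i + c : ℕ) : ZMod m) = ∏ n : ZMod m, g n := by
  have h : ∀ i : ℕ, ((i + c : ℕ) : ZMod m) = ((i : ℕ) : ZMod m) + (c : ZMod m) := by
    intro i; push_cast; ring
  calc ∏ i ∈ Finset.range m, g ((i + c : ℕ) : ZMod m)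
      = ∏ i ∈ Finset.range m, (fun n => g (n + (c : ZMod m))) ((i : ℕ) : ZMod m) := by
        refine Finset.prod_congr rfl fun i _ => by rw [h i]
    _ = ∏ n : ZMod m, g (n + (c : ZMod m)) := prod_natCast m (fun n => g (n + (c : ZMod m)))
    _ = ∏ n : ZMod m, g n := prod_shift m g _


/-- `2(y_1 C^{(m)} - F_m C^{(m-1)}) - A^{(m)} = 𝐲 - 𝐅/𝐲 = δ` in `L`. -/
theorem stmt_4 (hm : 2 ≤ m) (hF : ∀ n, F n ≠ 0) :
    2 * (yv K m ((1 : ℕ) : ZMod m) * Cv K m F m - Fc K m F ((m : ℕ) : ZMod m) * Cv K m F (m - 1))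
        - Av K m F = boldy K m - boldF K m F / boldy K m ∧
      boldy K m - boldF K m F / boldy K m = deltav K m F := by
  obtain ⟨s, rfl⟩ : ∃ s, m = s + 2 := ⟨m - 2, by omega⟩
  refine ⟨?_, rfl⟩
  have h0 : ((s+2 : ℕ) : ZMod (s+2)) = 0 := ZMod.natCast_self _
  have hy1 : ((s+3 : ℕ) : ZMod (s+2)) = ((1:ℕ) : ZMod (s+2)) := by
    rw [show s+3 = (s+2)+1 from rfl, Nat.cast_add, h0, Nat.cast_one, zero_add]
  have hz1 : zv K (s+2) F ((1:ℕ):ZMod (s+2)) * yv K (s+2) ((2:ℕ):ZMod (s+2))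
      = yv K (s+2) ((1:ℕ):ZMod (s+2)) * yv K (s+2) ((2:ℕ):ZMod (s+2))
        + Fc K (s+2) F ((1:ℕ):ZMod (s+2)) := by
    have h12 : ((1:ℕ):ZMod (s+2)) + 1 = ((2:ℕ):ZMod (s+2)) := by push_cast; ring
    have h := zy K (s+2) F ((1:ℕ):ZMod (s+2))
    rw [h12] at h; exact h
  have hCT2 := CT K (s+2) F (s+1)
  have hCT1 := CT K (s+2) F s
  have hCTp := CTp K (s+2) F s
  have hA := lemA K (s+2) F (s+1)
  have hB := lemB K (s+2) F (s+1)
  norm_num at hCT2 hA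
  have hD : Dv K (s+2) (s+1) = Dv K (s+2) s * yv K (s+2) ((1:ℕ):ZMod (s+2)) := by
    unfold Dv; rw [Finset.prod_range_succ, hy1]
  have hQ : Qv K (s+2) (s+1)
      = (∏ i ∈ Finset.range (s+1), yv K (s+2) ((i+2 : ℕ):ZMod (s+2))) * Dv K (s+2) (s+1) := by
    unfold Qv Dv; rw [Finset.prod_mul_distrib]
  have hb1 : yv K (s+2) ((1:ℕ):ZMod (s+2))
      * ∏ i ∈ Finset.range (s+1), yv K (s+2) ((i+2 : ℕ):ZMod (s+2)) = boldy K (s+2) := by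
    unfold boldy
    rw [← prod_shift_range (s+2) (yv K (s+2)) 1]
    conv_rhs => rw [Finset.prod_range_succ']
    exact mul_comm _ _
  have hb2 : yv K (s+2) ((2:ℕ):ZMod (s+2)) * Dv K (s+2) (s+1) = boldy K (s+2) := by
    unfold boldy Dv
    rw [← prod_shift_range (s+2) (yv K (s+2)) 2]
    conv_rhs => rw [Finset.prod_range_succ']
    exact mul_comm _ _
  have hDp : yv K (s+2) ((3:ℕ):ZMod (s+2)) * Dpv K (s+2) s = Dv K (s+2) (s+1) := by
    unfold Dv Dpv
    conv_rhs => rw [Finset.prod_range_succ']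
    exact mul_comm _ _
  have hbF : Fc K (s+2) F ((1:ℕ):ZMod (s+2)) * Rv K (s+2) F (s+1) = boldF K (s+2) F := by
    unfold boldF Rv
    rw [← prod_shift_range (s+2) (Fc K (s+2) F) 1]
    conv_rhs => rw [Finset.prod_range_succ']
    exact mul_comm _ _
  have hbne : boldy K (s+2) ≠ 0 := by
    unfold boldy
    exact Finset.prod_ne_zero_iff.mpr fun n _ => yv_ne K (s+2) n
  have hE1 : yv K (s+2) ((1:ℕ):ZMod (s+2)) * Cv K (s+2) F (s+2)
      - Fc K (s+2) F 0 * Cv K (s+2) F (s+1) = boldy K (s+2) := by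
    apply mul_right_cancel₀ (Dv_ne K (s+2) (s+1))
    linear_combination yv K (s+2) ((1:ℕ):ZMod (s+2)) * hCT2
      - Fc K (s+2) F 0 * Cv K (s+2) F (s+1) * hD
      - Fc K (s+2) F 0 * yv K (s+2) ((1:ℕ):ZMod (s+2)) * hCT1
      + yv K (s+2) ((1:ℕ):ZMod (s+2)) * hA
      + yv K (s+2) ((1:ℕ):ZMod (s+2)) * hQ
      + Dv K (s+2) (s+1) * hb1
  have hE2 : zv K (s+2) F ((1:ℕ):ZMod (s+2)) * Cv K (s+2) F (s+2)
      - yv K (s+2) ((1:ℕ):ZMod (s+2)) * Cv K (s+2) F (s+2)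
      - Fc K (s+2) F ((1:ℕ):ZMod (s+2)) * Cpv K (s+2) F (s+1)
      = boldF K (s+2) F / boldy K (s+2) := by
    rw [eq_div_iff hbne, ← hb2, ← hbF]
    linear_combination Cv K (s+2) F (s+2) * Dv K (s+2) (s+1) * hz1
      + Fc K (s+2) F ((1:ℕ):ZMod (s+2)) * hCT2
      + Fc K (s+2) F ((1:ℕ):ZMod (s+2)) * Cpv K (s+2) F (s+1)
          * yv K (s+2) ((2:ℕ):ZMod (s+2)) * hDp
      - Fc K (s+2) F ((1:ℕ):ZMod (s+2)) * yv K (s+2) ((2:ℕ):ZMod (s+2))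
          * yv K (s+2) ((3:ℕ):ZMod (s+2)) * hCTp
      + Fc K (s+2) F ((1:ℕ):ZMod (s+2)) * hB
  have hred : s + 2 - 1 = s + 1 := rfl
  unfold Av
  rw [hred, h0]
  linear_combination hE1 - hE2
end
end

section
/- For every $n \in \mathbb{Z}/m\mathbb{Z}$, the identity $X_n P_{n-1} - P_n = \prod_{k \in \mathbb{Z}/m\mathbb{Z}} X_k - 1$ holds in $L$; in particular, for all $n, n' \in \mathbb{Z}/m\mathbb{Z}$ one has $X_n P_{n-1} + P_{n'} = X_{n'} P_{n'-1} + P_n$. -/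
/- Setting: `Lm K m` is the field of fractions of the (Laurent) polynomial ring over a field
`K` in commuting variables `yv n` indexed by `n : ZMod m`, with fixed scalars `F n : K`. -/

noncomputable section

variable (K : Type) [Field K] (m : ℕ) [NeZero m]

variable (F : ZMod m → K)

lemma key (n : ZMod m) :
    Xv K m F n * Pv K m F (n - 1) =
      ∑ k ∈ Finset.range m, ∏ j ∈ Finset.range (k + 1), Xv K m F (n - (j : ZMod m)) := by
  have hm1 : m = (m - 1) + 1 := (Nat.succ_pred_eq_of_pos (NeZero.pos m)).symm
  have h0 : ∀ k, Xv K m F n * ∏ j ∈ Finset.range (k + 1), Xv K m F (n - 1 - (j : ZMod m))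
      = ∏ j ∈ Finset.range (k + 1 + 1), Xv K m F (n - (j : ZMod m)) := by
    intro k
    conv_rhs => rw [Finset.prod_range_succ']
    rw [Nat.cast_zero, sub_zero, mul_comm]
    congr 1
    apply Finset.prod_congr rfl
    intro j _
    congr 1
    push_cast
    ring
  rw [Pv, mul_add, mul_one, Finset.mul_sum,
    show Finset.range m = Finset.range ((m - 1) + 1) by rw [← hm1], Finset.sum_range_succ',
    Finset.sum_congr rfl (fun k _ => h0 k)]
  simp [add_comm]

lemma prod_shift_s13 (n : ZMod m) :
    ∏ j ∈ Finset.range m, Xv K m F (n - (j : ZMod m)) = ∏ k : ZMod m, Xv K m F k := by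
  refine Finset.prod_bij (fun j _ => n - (j : ZMod m)) (fun j _ => Finset.mem_univ _)
    (fun i hi j hj h => ?_) (fun x _ => ⟨(n - x).val, ?_, ?_⟩) (fun j _ => rfl)
  · have h' : n - (i : ZMod m) = n - (j : ZMod m) := h
    have hij : (i : ZMod m) = (j : ZMod m) := by linear_combination -h'
    have hi' := Finset.mem_range.mp hi
    have hj' := Finset.mem_range.mp hj
    rwa [ZMod.natCast_eq_natCast_iff', Nat.mod_eq_of_lt hi', Nat.mod_eq_of_lt hj'] at hij
  · exact Finset.mem_range.mpr (ZMod.val_lt _)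
  · show n - ((n - x).val : ZMod m) = x
    rw [ZMod.natCast_val, ZMod.cast_id, sub_sub_cancel]

/-- `X_n P_{n-1} - P_n = ∏_k X_k - 1` for every `n`; in particular
`X_n P_{n-1} + P_{n'} = X_{n'} P_{n'-1} + P_n` for all `n, n'`. -/
theorem stmt_13 (hm : 2 ≤ m) (hF : ∀ n, F n ≠ 0) :
    (∀ n : ZMod m,
        Xv K m F n * Pv K m F (n - 1) - Pv K m F n = (∏ k : ZMod m, Xv K m F k) - 1) ∧
      ∀ n n' : ZMod m,
        Xv K m F n * Pv K m F (n - 1) + Pv K m F n' =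
          Xv K m F n' * Pv K m F (n' - 1) + Pv K m F n := by
  have h1 : ∀ n : ZMod m,
      Xv K m F n * Pv K m F (n - 1) - Pv K m F n = (∏ k : ZMod m, Xv K m F k) - 1 := by
    intro n
    rw [key, Pv]
    have hm1 : m = (m - 1) + 1 := (Nat.succ_pred_eq_of_pos (NeZero.pos m)).symm
    rw [show Finset.range m = Finset.range ((m-1)+1) by rw [← hm1], Finset.sum_range_succ,
      ← hm1, ← prod_shift_s13 K m F n]
    ring
  exact ⟨h1, fun n n' => by linear_combination h1 n - h1 n'⟩
end
end
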